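/- arXiv:0803.2990 — 2 statements merged into one kernel-verified Lean document; each statement's English description precedes it below -/
import Mathlib

section
/- Let R be a unique factorization domain, g a prime element of R, and u, v, s, t, a, c elements of R with v, t nonzero. Suppose u·v = s·t, that g^p divides u, that q is the largest natural number with g^q dividing v, that g does not divide s, and that a·v = c·t. Then g^p divides a. -/
theorem Prime.pow_dvd_of_pow_add_dvd_mul {R : Type*} [CommMonoidWithZero R] [IsCancelMulZero R]
    {g a v : R} {p q : ℕ} (hg : Prime g) (hqv : g ^ q ∣ v) (hqv' : ¬ g ^ (q + 1) ∣ v)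
    (h : g ^ (p + q) ∣ a * v) : g ^ p ∣ a := by
  obtain ⟨w, rfl⟩ := hqv
  have hgw : ¬ g ∣ w := fun hw => hqv' (pow_succ g q ▸ mul_dvd_mul_left _ hw)
  have haw : g ^ p ∣ a * w := by
    rw [pow_add, mul_left_comm, mul_comm (g ^ p)] at h
    exact (mul_dvd_mul_iff_left (pow_ne_zero q hg.ne_zero)).mp h
  exact hg.pow_dvd_of_dvd_mul_right p hgw haw

theorem stmt_4_general {R : Type*} [CommRing R] [IsDomain R]
    (g u v s t a c : R) (p q : ℕ) (hg : Prime g)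
    (huv : u * v = s * t) (hpu : g ^ p ∣ u)
    (hqv : g ^ q ∣ v) (hqv' : ¬ g ^ (q + 1) ∣ v)
    (hgs : ¬ g ∣ s) (hav : a * v = c * t) :
    g ^ p ∣ a := by
  have hgt : g ^ (p + q) ∣ t :=
    hg.pow_dvd_of_dvd_mul_left _ hgs (huv ▸ pow_add g p q ▸ mul_dvd_mul hpu hqv)
  exact hg.pow_dvd_of_pow_add_dvd_mul hqv hqv' (hav ▸ dvd_mul_of_dvd_right hgt c)

/-- In a UFD, if `g` is prime, `u * v = s * t`, `g ^ p ∣ u`, `q` is the largest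
natural number with `g ^ q ∣ v`, `g ∤ s` and `a * v = c * t`, then `g ^ p ∣ a`. -/
theorem stmt_4 {R : Type*} [CommRing R] [IsDomain R] [UniqueFactorizationMonoid R]
    (g u v s t a c : R) (p q : ℕ) (hg : Prime g)
    (hv : v ≠ 0) (ht : t ≠ 0)
    (huv : u * v = s * t) (hpu : g ^ p ∣ u)
    (hqv : g ^ q ∣ v) (hqv' : ¬ g ^ (q + 1) ∣ v)
    (hgs : ¬ g ∣ s) (hav : a * v = c * t) :
    g ^ p ∣ a :=
  stmt_4_general g u v s t a c p q hg huv hpu hqv hqv' hgs hav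
end

section
/- Let R be a unique factorization domain (local ring of a smooth variety). Consider a skew-commutative cube of rank-one free R-modules with all edge maps multiplication by nonzero elements: edges out of the top vertex are f¹₂₃, f²₁₃, f³₁₂, middle edges f^i_j (from vertex {i,j} in direction i, landing at {j}), and bottom edges f^i. Suppose the commutativity relations f¹₂₃ · f³₂ = f³₁₂ · f¹₂ (and its cyclic analogues) hold, and let d = gcd(f¹₂₃, f²₁₃, f³₁₂). Then H^{-2} of the total complex is isomorphic to R/(d) · (1/d) ≅ R/(d). In particular, if f¹₂₃, f²₁₃, f³₁₂ have no common prime factor then H^{-2} = 0. -/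
/-!
Write `aₖ = e (univ \ {k}) k` for the three edges at the top vertex. On the face spanned by the
directions `i, k` at the vertex `{j}`, skew-commutativity says that `a` satisfies the `j`-th
equation of `δ₂ a = 0`; as the middle edges are nonzero, every cycle `x` of `δ₂` is therefore
proportional to `a`: `aᵢ xⱼ = aⱼ xᵢ`. Writing `a = d • w`, the entries of `w` have no common
factor, so unique factorization forces `x = r • w`. Hence `ker δ₂ = R ∙ w ≅ R`, and under this
isomorphism `im δ₃ = R ∙ (d • w)` becomes the ideal `(d)`.
-/

theorem exists_eq_smul_of_mul_eq_mul {R ι : Type*} [CommRing R] [IsDomain R]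
    [NormalizedGCDMonoid R] [Fintype ι] {w x : ι → R}
    (hw : ∀ c, (∀ i, c ∣ w i) → IsUnit c) {i₀ : ι} (hi₀ : w i₀ ≠ 0)
    (hx : ∀ i j, w i * x j = w j * x i) : ∃ r : R, x = r • w := by
  have hdvd_gcd : w i₀ ∣ Finset.univ.gcd fun i => w i * x i₀ :=
    Finset.dvd_gcd_iff.mpr fun i _ => ⟨x i, (hx i₀ i).symm⟩
  have hunit : IsUnit (Finset.univ.gcd w) := hw _ fun i => Finset.gcd_dvd (Finset.mem_univ i)
  obtain ⟨r, hr⟩ : w i₀ ∣ x i₀ :=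
    hunit.dvd_mul_left.mp <| hdvd_gcd.trans (Finset.gcd_mul_right' _ _ _).dvd
  refine ⟨r, funext fun j => mul_left_cancel₀ hi₀ ?_⟩
  calc w i₀ * x j = w j * x i₀ := hx i₀ j
    _ = w i₀ * (r • w) j := by rw [hr, Pi.smul_apply, smul_eq_mul]; ring

theorem isUnit_of_forall_prime_not_dvd {R : Type*} [CommMonoidWithZero R]
    [UniqueFactorizationMonoid R] {d : R} (hd : d ≠ 0) (h : ∀ p, Prime p → ¬ p ∣ d) :
    IsUnit d := by
  by_contra hu
  obtain ⟨p, hp, hpd⟩ := WfDvdMonoid.exists_irreducible_factor hu hd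
  exact h p (UniqueFactorizationMonoid.irreducible_iff_prime.mp hp) hpd

section SpanQuotient

variable {R M : Type*} [CommRing R] [IsDomain R] [AddCommGroup M] [Module R M]
  [Module.IsTorsionFree R M]

theorem map_toSpanNonzeroSingleton_span_singleton {w : M} (hw : w ≠ 0) (d : R) :
    (R ∙ d).map (LinearEquiv.toSpanNonzeroSingleton R M w hw : R →ₗ[R] R ∙ w) =
      (R ∙ (d • w)).comap (R ∙ w).subtype := by
  ext ⟨x, hx⟩
  obtain ⟨t, rfl⟩ := Submodule.mem_span_singleton.mp hx
  simp only [Submodule.mem_map, Submodule.mem_comap, Submodule.subtype_apply,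
    Submodule.mem_span_singleton, LinearEquiv.coe_coe,
    LinearEquiv.toSpanNonzeroSingleton_apply, Subtype.mk.injEq, smul_eq_mul, smul_smul,
    (smul_left_injective R hw).eq_iff]
  constructor
  · rintro ⟨_, ⟨a, rfl⟩, h⟩
    exact ⟨a, h⟩
  · rintro ⟨a, h⟩
    exact ⟨_, ⟨a, rfl⟩, h⟩

noncomputable def quotSpanSMulEquiv (w : M) (hw : w ≠ 0) (d : R) :
    ((R ∙ w) ⧸ (R ∙ (d • w)).comap (R ∙ w).subtype) ≃ₗ[R] R ⧸ Ideal.span {d} :=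
  (Submodule.Quotient.equiv _ _ (LinearEquiv.toSpanNonzeroSingleton R M w hw)
    (map_toSpanNonzeroSingleton_span_singleton hw d)).symm

end SpanQuotient

namespace SkewCube

theorem neg_add_eq_third {i j k : Fin 3} (hij : i ≠ j) (hjk : j ≠ k) (hik : i ≠ k) :
    -(i + j) = k := by
  revert i j k; decide

theorem univ_erase_eq_pair {i j k : Fin 3} (hij : i ≠ j) (hjk : j ≠ k) (hik : i ≠ k) :
    Finset.univ.erase j = {i, k} := by
  revert i j k; decide

theorem insert_singleton_eq_univ_erase {i j k : Fin 3} (hij : i ≠ j) (hjk : j ≠ k)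
    (hik : i ≠ k) : insert i {j} = Finset.univ.erase k := by
  revert i j k; decide

variable {R : Type*} [CommRing R] {e : Finset (Fin 3) → Fin 3 → R}
  {δ₂ : (Fin 3 → R) →ₗ[R] (Fin 3 → R)}

def EdgesNeZero (e : Finset (Fin 3) → Fin 3 → R) : Prop :=
  ∀ (v : Finset (Fin 3)) (i : Fin 3), i ∉ v → e v i ≠ 0

def SkewCommutes (e : Finset (Fin 3) → Fin 3 → R) : Prop :=
  ∀ (v : Finset (Fin 3)) (i j : Fin 3), i ∉ v → j ∉ v → i ≠ j →
    e v i * e (insert i v) j + e v j * e (insert j v) i = 0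

def IsMiddleDifferential (e : Finset (Fin 3) → Fin 3 → R)
    (δ₂ : (Fin 3 → R) →ₗ[R] (Fin 3 → R)) : Prop :=
  ∀ (x : Fin 3 → R) (j : Fin 3),
    δ₂ x j = ∑ i ∈ Finset.univ.erase j, e {j} i * x (-(i + j))

def topEdge (e : Finset (Fin 3) → Fin 3 → R) (k : Fin 3) : R :=
  e (Finset.univ.erase k) k

theorem topEdge_ne_zero (hne : EdgesNeZero e)
    (k : Fin 3) : topEdge e k ≠ 0 :=
  hne _ k (Finset.notMem_erase k _)

theorem delta_apply
    (hδ₂ : IsMiddleDifferential e δ₂)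
    {i j k : Fin 3} (hij : i ≠ j) (hjk : j ≠ k) (hik : i ≠ k) (x : Fin 3 → R) :
    δ₂ x j = e {j} i * x k + e {j} k * x i := by
  rw [hδ₂, univ_erase_eq_pair hij hjk hik, Finset.sum_pair hik, neg_add_eq_third hij hjk hik,
    neg_add_eq_third hjk.symm hij.symm hik.symm]

theorem face_relation
    (hskew : SkewCommutes e)
    {i j k : Fin 3} (hij : i ≠ j) (hjk : j ≠ k) (hik : i ≠ k) :
    e {j} i * topEdge e k + e {j} k * topEdge e i = 0 := by
  have h := hskew {j} i k (by simpa using hij) (by simpa using hjk.symm) hik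
  rwa [insert_singleton_eq_univ_erase hij hjk hik,
    insert_singleton_eq_univ_erase hjk.symm hij.symm hik.symm] at h

theorem delta_topEdge_eq_zero
    (hskew : SkewCommutes e)
    (hδ₂ : IsMiddleDifferential e δ₂) :
    δ₂ (topEdge e) = 0 := by
  funext j
  have hij : j + 1 ≠ j := by revert j; decide
  have hjk : j ≠ j + 2 := by revert j; decide
  have hik : j + 1 ≠ j + 2 := by revert j; decide
  rw [delta_apply hδ₂ hij hjk hik, face_relation hskew hij hjk hik, Pi.zero_apply]

theorem topEdge_mul_eq_of_delta_eq_zero [IsDomain R]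
    (hne : EdgesNeZero e)
    (hskew : SkewCommutes e)
    (hδ₂ : IsMiddleDifferential e δ₂)
    {x : Fin 3 → R} (hx : δ₂ x = 0) (i k : Fin 3) :
    topEdge e i * x k = topEdge e k * x i := by
  rcases eq_or_ne i k with rfl | hik
  · rfl
  set j := -(i + k)
  have hij : i ≠ j := by revert i k; decide
  have hjk : j ≠ k := by revert i k; decide
  have hx_j : e {j} i * x k + e {j} k * x i = 0 := by
    rw [← delta_apply hδ₂ hij hjk hik, hx, Pi.zero_apply]
  have hface := face_relation hskew hij hjk hik
  apply mul_left_cancel₀ (hne {j} i (by simpa using hij))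
  linear_combination topEdge e i * hx_j - x i * hface

theorem ker_delta_eq_span [IsDomain R] [NormalizedGCDMonoid R]
    (hne : EdgesNeZero e)
    (hskew : SkewCommutes e)
    (hδ₂ : IsMiddleDifferential e δ₂)
    {d : R} (hd : d ≠ 0) {w : Fin 3 → R} (hw : ∀ k, topEdge e k = d * w k)
    (hw_coprime : ∀ c, (∀ k, c ∣ w k) → IsUnit c) :
    LinearMap.ker δ₂ = R ∙ w := by
  have hw₀ : w 0 ≠ 0 := right_ne_zero_of_mul (hw 0 ▸ topEdge_ne_zero hne 0)
  ext x
  rw [LinearMap.mem_ker, Submodule.mem_span_singleton]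
  constructor
  · intro hx
    obtain ⟨r, rfl⟩ := exists_eq_smul_of_mul_eq_mul hw_coprime hw₀ fun i k =>
      mul_left_cancel₀ hd <| by
        simpa only [hw, mul_assoc] using topEdge_mul_eq_of_delta_eq_zero hne hskew hδ₂ hx i k
    exact ⟨r, rfl⟩
  · rintro ⟨r, rfl⟩
    have hdw : d • δ₂ w = 0 := by
      rw [← map_smul, show d • w = topEdge e from funext fun k => (hw k).symm,
        delta_topEdge_eq_zero hskew hδ₂]
    rw [map_smul, (smul_eq_zero.mp hdw).resolve_left hd, smul_zero]

end SkewCube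

/-- For a skew-commutative cube of rank-one free modules over a UFD `R` with all
edge elements nonzero, `H⁻²` of the total complex is isomorphic to `R/(d)` where
`d = gcd` of the three top edge elements; in particular it vanishes when those
three elements have no common prime factor.  Here `δ₃ : R → R³` is the
differential out of the top vertex and `δ₂ : R³ → R³` the next differential. -/
theorem stmt_7 {R : Type*} [CommRing R] [IsDomain R] [UniqueFactorizationMonoid R]
    (e : Finset (Fin 3) → Fin 3 → R)
    (hne : ∀ (v : Finset (Fin 3)) (i : Fin 3), i ∉ v → e v i ≠ 0)
    (hskew : ∀ (v : Finset (Fin 3)) (i j : Fin 3), i ∉ v → j ∉ v → i ≠ j →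
      e v i * e (insert i v) j + e v j * e (insert j v) i = 0)
    (d : R)
    (hd : ∀ k : Fin 3, d ∣ e (Finset.univ.erase k) k)
    (hd' : ∀ c : R, (∀ k : Fin 3, c ∣ e (Finset.univ.erase k) k) → c ∣ d)
    (δ₃ : R →ₗ[R] (Fin 3 → R))
    (hδ₃ : ∀ (r : R) (k : Fin 3), δ₃ r k = e (Finset.univ.erase k) k * r)
    (δ₂ : (Fin 3 → R) →ₗ[R] (Fin 3 → R))
    (hδ₂ : ∀ (x : Fin 3 → R) (j : Fin 3),
      δ₂ x j = ∑ i ∈ Finset.univ.erase j, e {j} i * x (-(i + j))) :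
    Nonempty
      ((LinearMap.ker δ₂ ⧸
          (LinearMap.range δ₃).comap (LinearMap.ker δ₂).subtype)
        ≃ₗ[R] R ⧸ (Ideal.span {d} : Ideal R)) ∧
    ((∀ p : R, Prime p → ¬ (∀ k : Fin 3, p ∣ e (Finset.univ.erase k) k)) →
      ∀ x y : (LinearMap.ker δ₂ ⧸
          (LinearMap.range δ₃).comap (LinearMap.ker δ₂).subtype), x = y) := by
  let := UniqueFactorizationMonoid.strongNormalizationMonoid (α := R)
  let := UniqueFactorizationMonoid.toNormalizedGCDMonoid R
  have hd₀ : d ≠ 0 := ne_zero_of_dvd_ne_zero (SkewCube.topEdge_ne_zero hne 0) (hd 0)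
  choose w hw using hd
  have hw₀ : w ≠ 0 := fun h => SkewCube.topEdge_ne_zero hne 0 <| by
    rw [SkewCube.topEdge, hw, h, Pi.zero_apply, mul_zero]
  have hw_coprime : ∀ c, (∀ k, c ∣ w k) → IsUnit c := fun c hc =>
    isUnit_of_dvd_one <| (mul_dvd_mul_iff_left hd₀).mp <| by
      simpa only [mul_one] using hd' (d * c) fun k => hw k ▸ mul_dvd_mul_left d (hc k)
  have hrange : LinearMap.range δ₃ = R ∙ (d • w) := by
    rw [← LinearMap.range_toSpanSingleton]
    congr
    ext k
    simp [hδ₃, hw, mul_comm]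
  rw [SkewCube.ker_delta_eq_span hne hskew hδ₂ hd₀ hw hw_coprime, hrange]
  refine ⟨⟨quotSpanSMulEquiv w hw₀ d⟩, fun hprime x y => ?_⟩
  have hunit : IsUnit d := isUnit_of_forall_prime_not_dvd hd₀ fun p hp hpd =>
    hprime p hp fun k => hpd.trans ⟨w k, hw k⟩
  have : Subsingleton (R ⧸ Ideal.span {d}) :=
    Ideal.Quotient.subsingleton_iff.mpr (Ideal.span_singleton_eq_top.mpr hunit)
  exact (quotSpanSMulEquiv w hw₀ d).injective (Subsingleton.elim _ _)
end
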